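/- Let b ≥ 2 and m ≥ 1 be integers and let P be a (0,m,2)-net in base b. Then every axis-parallel box B = [x₁,y₁) × [x₂,y₂) ⊆ [0,1]² containing no point of P has area at most 4b²/b^m; in other words, disp(P) ≤ 4b²/b^m. -/
import Mathlib

private lemma exists_pow_between (b : ℕ) (hb : 2 ≤ b) (w : ℝ) (hw : 0 < w) (hw1 : w ≤ 1) :
    ∃ j : ℕ, 2 ≤ w * (b:ℝ)^j ∧ w * (b:ℝ)^j < 2 * b := by
  have hb1 : (1:ℝ) < (b:ℝ) := by exact_mod_cast hb.trans_lt' one_lt_two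
  obtain ⟨n, hn⟩ := pow_unbounded_of_one_lt (2/w) hb1
  have hex : ∃ j, 2 ≤ w * (b:ℝ)^j := by
    refine ⟨n, ?_⟩
    have := (div_lt_iff₀ hw).mp hn
    nlinarith
  classical
  set j := Nat.find hex with hjdef
  have hj : 2 ≤ w * (b:ℝ)^j := Nat.find_spec hex
  have hj0 : j ≠ 0 := by
    intro h
    rw [h] at hj
    simp at hj
    linarith
  have hj1 : ¬ (2 ≤ w * (b:ℝ)^(j-1)) :=
    Nat.find_min hex (Nat.sub_lt (Nat.pos_of_ne_zero hj0) one_pos)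
  push_neg at hj1
  refine ⟨j, hj, ?_⟩
  have hpj : (b:ℝ)^j = (b:ℝ)^(j-1) * b := by
    rw [← pow_succ, Nat.sub_add_cancel (Nat.one_le_iff_ne_zero.mpr hj0)]
  rw [hpj, ← mul_assoc]
  nlinarith

private lemma main_bound (b m : ℕ) (hb : 2 ≤ b) (hm : 1 ≤ m) (P : Finset (ℝ × ℝ))
    (hnet : ∀ j₁ j₂ : ℕ, j₁ + j₂ = m → ∀ a₁ < b ^ j₁, ∀ a₂ < b ^ j₂,
      ∃! p : ℝ × ℝ, p ∈ P ∧
        p ∈ Set.Ico ((a₁ : ℝ) / (b : ℝ) ^ j₁) (((a₁ : ℝ) + 1) / (b : ℝ) ^ j₁) ×ˢ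
            Set.Ico ((a₂ : ℝ) / (b : ℝ) ^ j₂) (((a₂ : ℝ) + 1) / (b : ℝ) ^ j₂)) :
    ∀ x₁ y₁ x₂ y₂ : ℝ, 0 ≤ x₁ → x₁ ≤ y₁ → y₁ ≤ 1 → 0 ≤ x₂ → x₂ ≤ y₂ → y₂ ≤ 1 →
      (∀ p ∈ P, p ∉ Set.Ico x₁ y₁ ×ˢ Set.Ico x₂ y₂) →
      (y₁ - x₁) * (y₂ - x₂) ≤ 4 * (b : ℝ) ^ 2 / (b : ℝ) ^ m := by
  intro x₁ y₁ x₂ y₂ hx₁ hxy₁ hy₁ hx₂ hxy₂ hy₂ hemp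
  have hb1 : (1:ℝ) < (b:ℝ) := by exact_mod_cast hb.trans_lt' one_lt_two
  have hbm : (0:ℝ) < (b:ℝ)^m := by positivity
  by_contra hcon
  push_neg at hcon
  set w := y₁ - x₁ with hw
  set h := y₂ - x₂ with hh
  have hwh : 0 < w * h := lt_trans (by positivity) hcon
  have hwnn : 0 ≤ w := by rw [hw]; linarith
  have hhnn : 0 ≤ h := by rw [hh]; linarith
  have hwpos : 0 < w := by
    rcases hwnn.lt_or_eq with h' | h'
    · exact h'
    · rw [← h', zero_mul] at hwh; exact absurd hwh (lt_irrefl 0)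
  have hhpos : 0 < h := by
    rcases hhnn.lt_or_eq with h' | h'
    · exact h'
    · rw [← h', mul_zero] at hwh; exact absurd hwh (lt_irrefl 0)
  have hw1 : w ≤ 1 := by simp [hw]; linarith
  have hh1 : h ≤ 1 := by simp [hh]; linarith
  obtain ⟨j₁, hj₁l, hj₁u⟩ := exists_pow_between b hb w hwpos hw1
  obtain ⟨j₂, hj₂l, hj₂u⟩ := exists_pow_between b hb h hhpos hh1
  -- j₁ + j₂ < m
  have hlt : (b:ℝ)^(j₁+j₂) < (b:ℝ)^m := by
    have h1 : w * h * (b:ℝ)^(j₁+j₂) < 4 * (b:ℝ)^2 := by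
      rw [pow_add]
      calc w * h * ((b:ℝ)^j₁ * (b:ℝ)^j₂) = (w * (b:ℝ)^j₁) * (h * (b:ℝ)^j₂) := by ring
      _ < (2*b) * (2*b) := by
          apply mul_lt_mul'' hj₁u hj₂u <;> positivity
      _ = 4 * (b:ℝ)^2 := by ring
    have h2 : 4 * (b:ℝ)^2 < w * h * (b:ℝ)^m := by
      have := (div_lt_iff₀ hbm).mp hcon
      linarith
    have hwh : 0 < w * h := mul_pos hwpos hhpos
    have := h1.trans h2
    exact lt_of_mul_lt_mul_left this (le_of_lt hwh)
  have hjm : j₁ + j₂ ≤ m := le_of_lt ((pow_lt_pow_iff_right₀ hb1).mp hlt)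
  -- bump j₂
  obtain ⟨j₂', hsum, hj₂le⟩ : ∃ k, j₁ + k = m ∧ j₂ ≤ k := ⟨m - j₁, by omega, by omega⟩
  have hpow2 : (b:ℝ)^j₂ ≤ (b:ℝ)^j₂' := pow_le_pow_right₀ (le_of_lt hb1) hj₂le
  have hj₂'l : 2 ≤ h * (b:ℝ)^j₂' := le_trans hj₂l (by nlinarith)
  -- choose cells
  have hp1 : (0:ℝ) < (b:ℝ)^j₁ := by positivity
  have hp2 : (0:ℝ) < (b:ℝ)^j₂' := by positivity
  obtain ⟨a₁, hceil1, hceil1'⟩ :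
      ∃ a : ℕ, x₁ * (b:ℝ)^j₁ ≤ (a:ℝ) ∧ (a:ℝ) < x₁ * (b:ℝ)^j₁ + 1 :=
    ⟨⌈x₁ * (b:ℝ)^j₁⌉₊, Nat.le_ceil _, Nat.ceil_lt_add_one (by positivity)⟩
  obtain ⟨a₂, hceil2, hceil2'⟩ :
      ∃ a : ℕ, x₂ * (b:ℝ)^j₂' ≤ (a:ℝ) ∧ (a:ℝ) < x₂ * (b:ℝ)^j₂' + 1 :=
    ⟨⌈x₂ * (b:ℝ)^j₂'⌉₊, Nat.le_ceil _, Nat.ceil_lt_add_one (by positivity)⟩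
  have hcell1l : x₁ ≤ (a₁:ℝ) / (b:ℝ)^j₁ := (le_div_iff₀ hp1).mpr hceil1
  have hcell1r : ((a₁:ℝ) + 1) / (b:ℝ)^j₁ ≤ y₁ := by
    rw [div_le_iff₀ hp1]
    have : y₁ * (b:ℝ)^j₁ = x₁ * (b:ℝ)^j₁ + w * (b:ℝ)^j₁ := by rw [hw]; ring
    linarith
  have hcell2l : x₂ ≤ (a₂:ℝ) / (b:ℝ)^j₂' := (le_div_iff₀ hp2).mpr hceil2
  have hcell2r : ((a₂:ℝ) + 1) / (b:ℝ)^j₂' ≤ y₂ := by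
    rw [div_le_iff₀ hp2]
    have : y₂ * (b:ℝ)^j₂' = x₂ * (b:ℝ)^j₂' + h * (b:ℝ)^j₂' := by rw [hh]; ring
    linarith
  have ha₁lt : a₁ < b ^ j₁ := by
    have h1 : ((a₁:ℝ) + 1) ≤ y₁ * (b:ℝ)^j₁ := by
      have := (div_le_iff₀ hp1).mp hcell1r; linarith
    have h2 : (a₁:ℝ) < (b:ℝ)^j₁ := by
      have := mul_le_of_le_one_left hp1.le hy₁
      linarith
    have h3 : (a₁:ℝ) < ((b^j₁ : ℕ) : ℝ) := by push_cast; exact h2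
    exact Nat.cast_lt.mp h3
  have ha₂lt : a₂ < b ^ j₂' := by
    have h1 : ((a₂:ℝ) + 1) ≤ y₂ * (b:ℝ)^j₂' := by
      have := (div_le_iff₀ hp2).mp hcell2r; linarith
    have h2 : (a₂:ℝ) < (b:ℝ)^j₂' := by
      have := mul_le_of_le_one_left hp2.le hy₂
      linarith
    have h3 : (a₂:ℝ) < ((b^j₂' : ℕ) : ℝ) := by push_cast; exact h2
    exact Nat.cast_lt.mp h3
  obtain ⟨p, ⟨hpP, hpcell⟩, -⟩ := hnet j₁ j₂' hsum a₁ ha₁lt a₂ ha₂lt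
  apply hemp p hpP
  obtain ⟨⟨hpl1, hpr1⟩, ⟨hpl2, hpr2⟩⟩ := hpcell
  constructor
  · exact ⟨le_trans hcell1l hpl1, lt_of_lt_of_le hpr1 hcell1r⟩
  · exact ⟨le_trans hcell2l hpl2, lt_of_lt_of_le hpr2 hcell2r⟩

/-- The set of areas of axis-parallel half-open boxes `[x1,y1) x [x2,y2)` inside `[0,1]^2`
containing no point of `P`. -/
def emptyBoxAreas (P : Set (ℝ × ℝ)) : Set ℝ :=
  { A | ∃ x₁ y₁ x₂ y₂ : ℝ,
      0 ≤ x₁ ∧ x₁ ≤ y₁ ∧ y₁ ≤ 1 ∧ 0 ≤ x₂ ∧ x₂ ≤ y₂ ∧ y₂ ≤ 1 ∧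
      (∀ p ∈ P, p ∉ Set.Ico x₁ y₁ ×ˢ Set.Ico x₂ y₂) ∧
      A = (y₁ - x₁) * (y₂ - x₂) }

/-- The dispersion of a point set `P ⊆ [0,1]^2`: the supremum of areas of empty
axis-parallel boxes. -/
noncomputable def disp (P : Set (ℝ × ℝ)) : ℝ := sSup (emptyBoxAreas P)

theorem disp_net_le (b m : ℕ) (hb : 2 ≤ b) (hm : 1 ≤ m) (P : Finset (ℝ × ℝ))
    (hcard : P.card = b ^ m)
    (hsub : ∀ p ∈ P, p ∈ Set.Ico (0 : ℝ) 1 ×ˢ Set.Ico (0 : ℝ) 1)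
    (hnet : ∀ j₁ j₂ : ℕ, j₁ + j₂ = m → ∀ a₁ < b ^ j₁, ∀ a₂ < b ^ j₂,
      ∃! p : ℝ × ℝ, p ∈ P ∧
        p ∈ Set.Ico ((a₁ : ℝ) / (b : ℝ) ^ j₁) (((a₁ : ℝ) + 1) / (b : ℝ) ^ j₁) ×ˢ
            Set.Ico ((a₂ : ℝ) / (b : ℝ) ^ j₂) (((a₂ : ℝ) + 1) / (b : ℝ) ^ j₂)) :
    (∀ x₁ y₁ x₂ y₂ : ℝ, 0 ≤ x₁ → x₁ ≤ y₁ → y₁ ≤ 1 → 0 ≤ x₂ → x₂ ≤ y₂ → y₂ ≤ 1 →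
      (∀ p ∈ P, p ∉ Set.Ico x₁ y₁ ×ˢ Set.Ico x₂ y₂) →
      (y₁ - x₁) * (y₂ - x₂) ≤ 4 * (b : ℝ) ^ 2 / (b : ℝ) ^ m) ∧
    disp (↑P : Set (ℝ × ℝ)) ≤ 4 * (b : ℝ) ^ 2 / (b : ℝ) ^ m := by
  have main := main_bound b m hb hm P hnet
  refine ⟨main, Real.sSup_le ?_ (by positivity)⟩
  rintro A ⟨x₁, y₁, x₂, y₂, h1, h2, h3, h4, h5, h6, hemp, rfl⟩
  exact main x₁ y₁ x₂ y₂ h1 h2 h3 h4 h5 h6 (fun p hp => hemp p (by exact_mod_cast hp))
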